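/- In an algebraic commutative integral quantale, any join of a family of pure elements is pure. -/

import Mathlib

open CompleteLattice

/-- A commutative integral quantale: a complete lattice with a commutative monoid
structure whose unit is the top element, with multiplication distributing over
arbitrary joins. -/
class CommQuantale (A : Type*) extends CompleteLattice A, CommMonoid A where
  one_eq_top : (1 : A) = ⊤
  mul_sSup_distrib : ∀ (a : A) (S : Set A), a * sSup S = ⨆ b ∈ S, a * b

namespace CommQuantale

variable {A : Type*} [CommQuantale A]

/-- m-prime element -/
def MPrime (p : A) : Prop := p < 1 ∧ ∀ a b : A, a * b ≤ p → a ≤ p ∨ b ≤ p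

/-- radical -/
def rad (a : A) : A := sInf {p : A | MPrime p ∧ a ≤ p}

/-- annihilator / negation `c^⊥ = ⋁{x | c·x = 0}` -/
def perp (c : A) : A := sSup {x : A | c * x = ⊥}

/-- residuation `c → b = ⋁{x | c·x ≤ b}` -/
def resid (c b : A) : A := sSup {x : A | c * x ≤ b}

/-- pure element -/
def IsPure (a : A) : Prop :=
  ∀ c : A, IsCompactElement c → c ≤ a → a ⊔ perp c = 1

/-- weakly pure element -/
def IsWPure (a : A) : Prop :=
  ∀ c : A, IsCompactElement c → c ≤ a → a ⊔ resid c (rad ⊥) = 1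

/-- complemented element -/
def IsComplemented (e : A) : Prop := ∃ f : A, e ⊔ f = 1 ∧ e ⊓ f = ⊥

/-- regular element: a join of complemented elements -/
def IsRegular (a : A) : Prop :=
  ∃ S : Set A, (∀ e ∈ S, IsComplemented e) ∧ a = sSup S

/-- Ker operator -/
def Ker (a : A) : A :=
  sSup {d : A | IsCompactElement d ∧ d ≤ a ∧ a ⊔ perp d = 1}

/-- O operator: `O(p) = ⋁{c compact | c^⊥ ≰ p}` -/
def O (p : A) : A := sSup {c : A | IsCompactElement c ∧ ¬ perp c ≤ p}

/-- O operator, as in Section 4: `O(p) = ⋁{d compact | d·e = 0 for some compact e ≰ p}` -/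
def O' (p : A) : A :=
  sSup {d : A | IsCompactElement d ∧ ∃ e : A, IsCompactElement e ∧ ¬ e ≤ p ∧ d * e = ⊥}

/-- algebraic quantale: every element is the join of the compact elements below it -/
def Algebraic (A : Type*) [CommQuantale A] : Prop :=
  ∀ a : A, a = sSup {c : A | IsCompactElement c ∧ c ≤ a}

/-- coherent quantale -/
def Coherent (A : Type*) [CommQuantale A] : Prop :=
  Algebraic A ∧ IsCompactElement (1 : A) ∧
    ∀ c d : A, IsCompactElement c → IsCompactElement d → IsCompactElement (c * d)

end CommQuantale

open CommQuantale


section Aux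
variable {A : Type*} [CommQuantale A]

lemma my_mul_sup (a b c : A) : a * (b ⊔ c) = a * b ⊔ a * c := by
  rw [← sSup_pair, CommQuantale.mul_sSup_distrib, iSup_pair]

lemma my_mul_mono_right (a : A) {b c : A} (h : b ≤ c) : a * b ≤ a * c := by
  have : a * c = a * b ⊔ a * c := by rw [← my_mul_sup, sup_eq_right.mpr h]
  rw [this]; exact le_sup_left

lemma my_mul_bot (a : A) : a * ⊥ = ⊥ := by
  rw [← sSup_empty, CommQuantale.mul_sSup_distrib]; simp

lemma my_mul_le_left (a b : A) : a * b ≤ a := by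
  calc a * b ≤ a * 1 := my_mul_mono_right a (by rw [CommQuantale.one_eq_top]; exact le_top)
  _ = a := mul_one a

lemma my_mul_le_right (a b : A) : a * b ≤ b := by
  rw [mul_comm]; exact my_mul_le_left b a

lemma my_mul_perp (c : A) : c * perp c = ⊥ := by
  rw [perp, CommQuantale.mul_sSup_distrib]
  exact le_bot_iff.mp (iSup₂_le fun x hx => le_of_eq hx)

lemma my_perp_anti {c d : A} (h : c ≤ d) : perp d ≤ perp c := by
  apply sSup_le_sSup
  intro x hx
  have hcx : c * x ≤ d * x := by
    rw [mul_comm c x, mul_comm d x]; exact my_mul_mono_right x h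
  exact le_bot_iff.mp (hx ▸ hcx)

lemma my_perp_sup {a x y : A} (hx : a ⊔ perp x = 1) (hy : a ⊔ perp y = 1) :
    a ⊔ perp (x ⊔ y) = 1 := by
  have hmem : perp x * perp y ≤ perp (x ⊔ y) := by
    apply _root_.le_sSup
    show (x ⊔ y) * (perp x * perp y) = ⊥
    have e1 : perp x * perp y * x = ⊥ := by
      rw [mul_comm (perp x) (perp y), mul_assoc, mul_comm (perp x) x, my_mul_perp, my_mul_bot]
    have e2 : perp x * perp y * y = ⊥ := by
      rw [mul_assoc, mul_comm (perp y) y, my_mul_perp, my_mul_bot]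
    rw [mul_comm (x ⊔ y), my_mul_sup, e1, e2, sup_idem]
  have key : (a ⊔ perp x) * (a ⊔ perp y) ≤ a ⊔ perp (x ⊔ y) := by
    rw [my_mul_sup]
    apply sup_le
    · exact (my_mul_le_right _ a).trans le_sup_left
    · rw [mul_comm, my_mul_sup]
      apply sup_le
      · exact (my_mul_le_right _ a).trans le_sup_left
      · exact (mul_comm (perp y) (perp x) ▸ hmem).trans le_sup_right
  rw [hx, hy, one_mul] at key
  exact le_antisymm (by rw [CommQuantale.one_eq_top]; exact le_top) key

lemma my_perp_bot : perp (⊥ : A) = 1 := by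
  rw [CommQuantale.one_eq_top]
  apply le_antisymm le_top
  apply _root_.le_sSup
  show (⊥ : A) * ⊤ = ⊥
  rw [mul_comm, my_mul_bot]

end Aux

theorem stmt11 {A : Type*} [CommQuantale A]
    (halg : Algebraic A) {ι : Type*} (f : ι → A)
    (hf : ∀ i, IsPure (f i)) : IsPure (⨆ i, f i) := by
  classical
  intro c hc hca
  set a := ⨆ i, f i with ha_def
  set S : Set A := {x | IsCompactElement x ∧ ∃ i, x ≤ f i} with hS
  have haS : a ≤ sSup S := by
    apply iSup_le
    intro i
    calc f i = sSup {c : A | IsCompactElement c ∧ c ≤ f i} := halg (f i)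
    _ ≤ sSup S := sSup_le_sSup (fun x hx => ⟨hx.1, i, hx.2⟩)
  obtain ⟨t, htS, hct⟩ := (isCompactElement_iff_exists_le_sSup_of_le_sSup A c).mp hc S (hca.trans haS)
  have hsup : a ⊔ perp (t.sup id) = 1 := by
    clear hct hca hc
    induction t using Finset.induction_on with
    | empty => simp [my_perp_bot, CommQuantale.one_eq_top]
    | @insert x s hxs ih =>
      rw [Finset.sup_insert]
      have hxS : x ∈ S := htS (Finset.mem_insert_self x s)
      obtain ⟨hxc, i, hxi⟩ := hxS
      have h1 : a ⊔ perp x = 1 := by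
        have := hf i x hxc hxi
        apply le_antisymm (by rw [CommQuantale.one_eq_top]; exact le_top)
        calc (1 : A) = f i ⊔ perp x := this.symm
        _ ≤ a ⊔ perp x := sup_le_sup_right (le_iSup f i) _
      exact my_perp_sup h1 (ih (fun y hy => htS (Finset.mem_insert_of_mem hy)))
  have hle : perp (t.sup id) ≤ perp c := my_perp_anti hct
  apply le_antisymm (by rw [CommQuantale.one_eq_top]; exact le_top)
  calc (1 : A) = a ⊔ perp (t.sup id) := hsup.symm
  _ ≤ a ⊔ perp c := sup_le_sup_left hle a
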